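/- Uniqueness of the Fourier-invariant combination: for a ∈ ℝ, the operator L + aM on Schwartz functions (L the Legendre operator, M multiplication by 1-|x|²) commutes with the Fourier transform if and only if a = 1. -/

import Mathlib

open MeasureTheory Filter Topology
noncomputable section

/-- Euclidean space ℝ^d. -/
abbrev Ed (d : ℕ) := EuclideanSpace ℝ (Fin d)

/-- Partial derivative ∂ᵢ of a complex-valued function. -/
def pd {d : ℕ} (i : Fin d) (f : Ed d → ℂ) (x : Ed d) : ℂ :=
  fderiv ℝ f x (EuclideanSpace.single i 1)

/-- Laplacian Δ = ∑ᵢ ∂ᵢ². -/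
def lap {d : ℕ} (f : Ed d → ℂ) (x : Ed d) : ℂ := ∑ i, pd i (pd i f) x

/-- Radial derivative r∂ᵣ = ∑ᵢ xᵢ ∂ᵢ. -/
def rdr {d : ℕ} (f : Ed d → ℂ) (x : Ed d) : ℂ := ∑ i, (x i : ℂ) * pd i f x

/-- Legendre operator L f = ∇·((1-|x|²)∇f). -/
def legendreOp {d : ℕ} (f : Ed d → ℂ) (x : Ed d) : ℂ :=
  ∑ i, pd i (fun y => ((1 - ‖y‖ ^ 2 : ℝ) : ℂ) * pd i f y) x

/-- Prolate operator W f = L f - |x|² f. -/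
def prolateOp {d : ℕ} (f : Ed d → ℂ) (x : Ed d) : ℂ :=
  legendreOp f x - ((‖x‖ ^ 2 : ℝ) : ℂ) * f x

/-- The Fourier transform ℱf(p) = (2π)^{-d/2} ∫ e^{-i x·p} f(x) dx. -/
def FT {d : ℕ} (f : Ed d → ℂ) (p : Ed d) : ℂ :=
  (((2 * Real.pi) ^ (-(d : ℝ) / 2) : ℝ) : ℂ) *
    ∫ x : Ed d, Complex.exp (-Complex.I * ((inner ℝ x p : ℝ) : ℂ)) * f x

/-!
Write `∂ᵢ` for the partial derivatives and `xᵢ` for the coordinate multiplications on Schwartz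
space, `Δ = ∑ ∂ᵢ²` and `R = ∑ xᵢ²`, so that `M = 1 - R` and `L = ∑ ∂ᵢ M ∂ᵢ`. The normalized
Fourier transform `ℱ` satisfies `ℱ ∂ᵢ = i xᵢ ℱ` and `ℱ xᵢ = i ∂ᵢ ℱ`, so it turns `R` into `-Δ` and
`Δ` into `-R`, while the canonical commutation relations `[∂ᵢ, xⱼ] = δᵢⱼ` give
`∑ ∂ᵢ R ∂ᵢ = ∑ xᵢ Δ xᵢ`, so this part of `L` is left invariant. Hence
`ℱ (L + a M) = (L + a M) ℱ + (a - 1) (Δ + R) ℱ`, an identity in any `ℂ`-algebra where these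
relations hold. As `ℱ` is invertible, commutation forces `(a - 1) (Δ + R) = 0`, and `Δ + R ≠ 0`
because `[Δ + R, xᵢ] = 2 ∂ᵢ` while `[∂ᵢ, xᵢ] = 1`.
-/

namespace CanonicalCommutation

open Finset

variable {A : Type*} [Ring A] {ι : Type*} [Fintype ι]

def sumSq (X : ι → A) : A := ∑ i, X i * X i

def weight (X : ι → A) : A := 1 - sumSq X

def legendre (P X : ι → A) : A := ∑ i, P i * weight X * P i

theorem mul_sumSq_of_commutator [DecidableEq ι] {a : A} {X : ι → A} (i : ι)
    (h : ∀ j, a * X j = X j * a + if i = j then 1 else 0) :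
    a * sumSq X = sumSq X * a + 2 * X i := by
  have hj : ∀ j, a * (X j * X j) = X j * X j * a + if i = j then 2 * X j else 0 := by
    intro j
    rw [← mul_assoc, h, add_mul, mul_assoc, h]
    split_ifs <;> noncomm_ring
  simp only [sumSq, mul_sum, hj, sum_add_distrib, sum_mul, sum_ite_eq, mem_univ, if_true]

theorem sumSq_mul_of_commutator [DecidableEq ι] {b : A} {X : ι → A} (i : ι)
    (h : ∀ j, X j * b = b * X j + if j = i then 1 else 0) :
    sumSq X * b = b * sumSq X + 2 * X i := by
  have hj : ∀ j, X j * X j * b = b * (X j * X j) + if j = i then 2 * X j else 0 := by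
    intro j
    rw [mul_assoc, h, mul_add, ← mul_assoc, h]
    split_ifs <;> noncomm_ring
  simp only [sumSq, sum_mul, hj, sum_add_distrib, mul_sum, sum_ite_eq', mem_univ, if_true]

variable {P X : ι → A}

theorem sum_mul_sumSq_mul_eq [DecidableEq ι]
    (hPX : ∀ i j, P i * X j = X j * P i + if i = j then 1 else 0) :
    ∑ i, P i * sumSq X * P i = ∑ i, X i * sumSq P * X i := by
  have hP : ∀ i, P i * sumSq X * P i = sumSq X * (P i * P i) + 2 * (X i * P i) := by
    intro i
    rw [mul_sumSq_of_commutator i (hPX i)]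
    noncomm_ring
  have hX : ∀ i, X i * sumSq P * X i = X i * X i * sumSq P + 2 * (X i * P i) := by
    intro i
    rw [mul_assoc, sumSq_mul_of_commutator i (fun j => hPX j i)]
    noncomm_ring
  simp only [hP, hX, sum_add_distrib, ← mul_sum, ← sum_mul]
  rfl

theorem legendre_eq_sumSq_sub : legendre P X = sumSq P - ∑ i, P i * sumSq X * P i := by
  simp only [legendre, weight, mul_sub, sub_mul, mul_one, sum_sub_distrib]
  rfl

variable [Algebra ℂ A] {F : A}

theorem mul_sumSq_of_intertwine (hFP : ∀ i, F * P i = Complex.I • (X i * F)) :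
    F * sumSq P = -(sumSq X * F) := by
  have hi : ∀ i, F * (P i * P i) = -(X i * X i * F) := by
    intro i
    rw [← mul_assoc, hFP, smul_mul_assoc, mul_assoc, hFP, mul_smul_comm, smul_smul,
      Complex.I_mul_I, neg_one_smul, mul_assoc]
  simp only [sumSq, mul_sum, hi, sum_neg_distrib, sum_mul]

theorem mul_sum_mul_sumSq_mul_of_intertwine (hFP : ∀ i, F * P i = Complex.I • (X i * F))
    (hFX : ∀ i, F * X i = Complex.I • (P i * F)) :
    F * ∑ i, P i * sumSq X * P i = (∑ i, X i * sumSq P * X i) * F := by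
  have hi : ∀ i, F * (P i * sumSq X * P i) = X i * sumSq P * X i * F := by
    intro i
    rw [← mul_assoc, ← mul_assoc, hFP, smul_mul_assoc, smul_mul_assoc, mul_assoc (X i),
      mul_sumSq_of_intertwine hFX, mul_neg, neg_mul, mul_assoc, mul_assoc, hFP, mul_smul_comm,
      mul_smul_comm, smul_neg, smul_smul, Complex.I_mul_I, neg_one_smul, neg_neg]
    noncomm_ring
  simp only [mul_sum, hi, sum_mul]

theorem mul_legendre_add_smul_weight [DecidableEq ι]
    (hFP : ∀ i, F * P i = Complex.I • (X i * F)) (hFX : ∀ i, F * X i = Complex.I • (P i * F))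
    (hPX : ∀ i j, P i * X j = X j * P i + if i = j then 1 else 0) (c : ℂ) :
    F * (legendre P X + c • weight X) =
      (legendre P X + c • weight X) * F + ((c - 1) • (sumSq P + sumSq X)) * F := by
  have hC := mul_sum_mul_sumSq_mul_of_intertwine hFP hFX
  rw [← sum_mul_sumSq_mul_eq hPX] at hC
  have hP := mul_sumSq_of_intertwine hFP
  have hX := mul_sumSq_of_intertwine hFX
  simp only [legendre_eq_sumSq_sub, weight, mul_add, mul_sub, mul_smul_comm, hC, hP, hX,
    add_mul, sub_mul, smul_mul_assoc, mul_one, one_mul]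
  module

theorem sumSq_add_sumSq_ne_zero [DecidableEq ι] [Nontrivial A] (i : ι)
    (hPX : ∀ i j, P i * X j = X j * P i + if i = j then 1 else 0)
    (hXX : ∀ j, Commute (X j) (X i)) :
    sumSq P + sumSq X ≠ 0 := by
  intro h
  have hcomm : (sumSq P + sumSq X) * X i = X i * (sumSq P + sumSq X) + 2 * P i := by
    have hX : Commute (sumSq X) (X i) :=
      Commute.sum_left _ _ _ fun j _ => (hXX j).mul_left (hXX j)
    rw [add_mul, sumSq_mul_of_commutator i (fun j => hPX j i), hX.eq]
    noncomm_ring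
  have hPi : P i = 0 := by
    rw [h, zero_mul, mul_zero, zero_add] at hcomm
    have h2 : (2 : ℂ) • P i = 0 := by rw [two_smul, ← two_mul, hcomm]
    exact (smul_eq_zero.mp h2).resolve_left two_ne_zero
  simpa [hPi] using hPX i i

theorem commute_legendre_add_smul_weight_iff [DecidableEq ι] [Nontrivial A] [Nonempty ι]
    (hF : IsUnit F) (hFP : ∀ i, F * P i = Complex.I • (X i * F))
    (hFX : ∀ i, F * X i = Complex.I • (P i * F))
    (hPX : ∀ i j, P i * X j = X j * P i + if i = j then 1 else 0)
    (hXX : ∀ i j, Commute (X i) (X j)) (c : ℂ) :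
    Commute F (legendre P X + c • weight X) ↔ c = 1 := by
  obtain ⟨i⟩ := ‹Nonempty ι›
  rw [Commute, SemiconjBy, mul_legendre_add_smul_weight hFP hFX hPX, add_eq_left,
    hF.mul_left_eq_zero, smul_eq_zero, sub_eq_zero]
  exact or_iff_left (sumSq_add_sumSq_ne_zero i hPX fun j => hXX j i)

end CanonicalCommutation

open scoped ContDiff SchwartzMap in
instance SchwartzMap.nontrivial {E F : Type*} [NormedAddCommGroup E] [NormedSpace ℝ E]
    [FiniteDimensional ℝ E] [NormedAddCommGroup F] [NormedSpace ℝ F] [Nontrivial F] :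
    Nontrivial 𝓢(E, F) := by
  obtain ⟨v, hv⟩ := exists_ne (0 : F)
  let φ : ContDiffBump (0 : E) := ⟨1, 2, one_pos, one_lt_two⟩
  have hsmooth : ContDiff ℝ ∞ fun x => φ x • v := φ.contDiff.smul contDiff_const
  have hsupp : HasCompactSupport fun x => φ x • v := φ.hasCompactSupport.smul_right
  refine ⟨⟨hsupp.toSchwartzMap hsmooth, 0, fun h => hv ?_⟩⟩
  simpa [φ.one_of_mem_closedBall (Metric.mem_closedBall_self φ.rIn_pos.le)] using
    congrArg (fun g : 𝓢(E, F) => g 0) h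

namespace FourierLegendre

open SchwartzMap LineDeriv FourierTransform Real CanonicalCommutation

variable {d : ℕ}

abbrev SchwartzOp (d : ℕ) := 𝓢(Ed d, ℂ) →L[ℂ] 𝓢(Ed d, ℂ)

def partialCLM (i : Fin d) : SchwartzOp d :=
  lineDerivOpCLM ℂ 𝓢(Ed d, ℂ) (EuclideanSpace.single i (1 : ℝ))

def coordMulCLM (i : Fin d) : SchwartzOp d :=
  smulLeftCLM ℂ fun x : Ed d => (x i : ℂ)

theorem hasTemperateGrowth_coord (i : Fin d) :
    Function.HasTemperateGrowth fun x : Ed d => (x i : ℂ) :=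
  (Complex.ofRealCLM.comp (EuclideanSpace.proj i)).hasTemperateGrowth

theorem coordMulCLM_apply (i : Fin d) (f : 𝓢(Ed d, ℂ)) (x : Ed d) :
    coordMulCLM i f x = x i * f x :=
  smulLeftCLM_apply_apply (hasTemperateGrowth_coord i) f x

theorem pd_eq_partialCLM (i : Fin d) (f : 𝓢(Ed d, ℂ)) : pd i ⇑f = ⇑(partialCLM i f) := rfl

theorem partialCLM_mul_coordMulCLM (i j : Fin d) :
    partialCLM i * coordMulCLM j = coordMulCLM j * partialCLM i + if i = j then 1 else 0 := by
  ext f x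
  have hprod : HasFDerivAt (fun y : Ed d => (y j : ℂ) * f y)
      ((x j : ℂ) • fderiv ℝ f x + f x • (Complex.ofRealCLM.comp (EuclideanSpace.proj j))) x :=
    (Complex.ofRealCLM.comp (EuclideanSpace.proj j)).hasFDerivAt.mul (f.hasFDerivAt x)
  have hfun : ⇑(coordMulCLM j f) = fun y : Ed d => (y j : ℂ) * f y :=
    funext (coordMulCLM_apply j f)
  rw [mul_apply_eq_comp, partialCLM, lineDerivOpCLM_apply, lineDerivOp_apply_eq_fderiv, hfun,
    hprod.fderiv]
  simp only [add_apply, mul_apply_eq_comp, coordMulCLM_apply, lineDerivOpCLM_apply,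
    lineDerivOp_apply_eq_fderiv]
  split_ifs with hij
  · subst hij
    simp [mul_comm]
  · simp [Ne.symm hij]

theorem coordMulCLM_commute (i j : Fin d) : Commute (coordMulCLM i) (coordMulCLM j) := by
  ext f x
  simp only [mul_apply_eq_comp, coordMulCLM_apply]
  ring

/- Mathlib's `𝓕` has kernel `e^{-2πi⟨x, ξ⟩}`, so `FT` is `(2π)^{-d/2}` times `𝓕` followed by the
dilation `ξ ↦ ξ / (2π)`. -/
def scaling (d : ℕ) : Ed d ≃L[ℝ] Ed d :=
  ContinuousLinearEquiv.smulLeft (Units.mk0 (2 * π)⁻¹ (by positivity))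

def dilation (d : ℕ) : 𝓢(Ed d, ℂ) ≃L[ℂ] 𝓢(Ed d, ℂ) :=
  ContinuousLinearEquiv.equivOfInverse (compCLMOfContinuousLinearEquiv ℂ (scaling d))
    (compCLMOfContinuousLinearEquiv ℂ (scaling d).symm) (fun f => by ext; simp)
    (fun f => by ext; simp)

def fourierNormalized (d : ℕ) : 𝓢(Ed d, ℂ) ≃L[ℂ] 𝓢(Ed d, ℂ) :=
  ((fourierCLE ℂ 𝓢(Ed d, ℂ)).trans (dilation d)).trans
    (ContinuousLinearEquiv.smulLeft
      (Units.mk0 (((2 * π) ^ (-(d : ℝ) / 2) : ℝ) : ℂ) (by norm_cast; positivity)))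

theorem fourierNormalized_apply (f : 𝓢(Ed d, ℂ)) (p : Ed d) :
    fourierNormalized d f p = (((2 * π) ^ (-(d : ℝ) / 2) : ℝ) : ℂ) * 𝓕 f ((2 * π)⁻¹ • p) :=
  rfl

theorem fourierNormalized_eq (f : 𝓢(Ed d, ℂ)) :
    fourierNormalized d f = (((2 * π) ^ (-(d : ℝ) / 2) : ℝ) : ℂ) •
      compCLMOfContinuousLinearEquiv ℂ (scaling d) (𝓕 f) :=
  rfl

theorem isUnit_fourierNormalized : IsUnit (fourierNormalized d : SchwartzOp d) :=
  (ContinuousLinearEquiv.toUnit (fourierNormalized d)).isUnit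

theorem FT_eq_fourierNormalized (f : 𝓢(Ed d, ℂ)) : FT ⇑f = ⇑(fourierNormalized d f) := by
  funext p
  rw [fourierNormalized_apply, fourier_coe, Real.fourier_eq', FT]
  congr 1
  refine integral_congr_ae (Eventually.of_forall fun x => ?_)
  have hphase : -2 * π * inner ℝ x ((2 * π)⁻¹ • p) = -inner ℝ x p := by
    rw [real_inner_smul_right]
    field_simp
  simp only [hphase, smul_eq_mul]
  push_cast
  ring_nf

theorem fourierNormalized_mul_partialCLM (i : Fin d) :
    (fourierNormalized d : SchwartzOp d) * partialCLM i =
      Complex.I • (coordMulCLM i * (fourierNormalized d : SchwartzOp d)) := by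
  ext f p
  have hinner : Function.HasTemperateGrowth
      fun x : Ed d => inner ℝ x (EuclideanSpace.single i (1 : ℝ)) := by
    fun_prop
  simp only [mul_apply_eq_comp, smul_apply, ContinuousLinearEquiv.coe_coe]
  rw [coordMulCLM_apply, fourierNormalized_apply, fourierNormalized_apply, partialCLM,
    lineDerivOpCLM_apply, fourier_lineDerivOp_eq, smul_apply, smulLeftCLM_apply_apply hinner,
    real_inner_smul_left, EuclideanSpace.inner_single_right]
  simp only [conj_trivial, smul_eq_mul, Complex.real_smul]
  push_cast
  field_simp

theorem smulLeftCLM_inner_single (i : Fin d) (f : 𝓢(Ed d, ℂ)) :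
    smulLeftCLM ℂ (fun x : Ed d => inner ℝ x (EuclideanSpace.single i (1 : ℝ))) f =
      coordMulCLM i f := by
  ext x
  rw [smulLeftCLM_apply_apply (by fun_prop), coordMulCLM_apply, EuclideanSpace.inner_single_right]
  simp [Complex.real_smul]

theorem fourierNormalized_mul_coordMulCLM (i : Fin d) :
    (fourierNormalized d : SchwartzOp d) * coordMulCLM i =
      Complex.I • (partialCLM i * (fourierNormalized d : SchwartzOp d)) := by
  ext1 f
  simp only [mul_apply_eq_comp, smul_apply, ContinuousLinearEquiv.coe_coe]
  have hscale : scaling d (EuclideanSpace.single i (1 : ℝ)) =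
      (2 * π)⁻¹ • EuclideanSpace.single i (1 : ℝ) := rfl
  rw [fourierNormalized_eq, fourierNormalized_eq, partialCLM, map_smul, lineDerivOpCLM_apply,
    lineDerivOp_compCLMOfContinuousLinearEquiv, hscale, lineDerivOp_left_smul,
    lineDerivOp_fourier_eq, smulLeftCLM_inner_single, fourier_smul]
  ext p
  simp only [smul_apply, compCLMOfContinuousLinearEquiv_apply, Function.comp_apply, smul_eq_mul,
    Complex.real_smul]
  push_cast
  field_simp
  rw [Complex.I_sq]
  ring

theorem sumSq_coordMulCLM_apply (f : 𝓢(Ed d, ℂ)) (x : Ed d) :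
    sumSq coordMulCLM f x = ((‖x‖ ^ 2 : ℝ) : ℂ) * f x := by
  simp only [sumSq, sum_apply, mul_apply_eq_comp, coordMulCLM_apply,
    EuclideanSpace.real_norm_sq_eq, Complex.ofReal_sum, Complex.ofReal_pow, Finset.sum_mul]
  exact Finset.sum_congr rfl fun i _ => by ring

theorem weight_coordMulCLM_apply (f : 𝓢(Ed d, ℂ)) (x : Ed d) :
    weight coordMulCLM f x = ((1 - ‖x‖ ^ 2 : ℝ) : ℂ) * f x := by
  rw [weight, sub_apply, sub_apply, one_apply_eq_self, sumSq_coordMulCLM_apply]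
  push_cast
  ring

theorem legendreOp_apply_eq_legendre (f : 𝓢(Ed d, ℂ)) (x : Ed d) :
    legendreOp ⇑f x = legendre partialCLM coordMulCLM f x := by
  simp only [legendreOp, legendre, sum_apply, mul_apply_eq_comp, pd_eq_partialCLM,
    ← weight_coordMulCLM_apply]

theorem legendreOp_add_mul_weight_apply (c : ℂ) (f : 𝓢(Ed d, ℂ)) (x : Ed d) :
    legendreOp ⇑f x + c * ((1 - ‖x‖ ^ 2 : ℝ) : ℂ) * f x =
      (legendre partialCLM coordMulCLM + c • weight coordMulCLM : SchwartzOp d) f x := by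
  rw [add_apply, add_apply, smul_apply, smul_apply, weight_coordMulCLM_apply,
    legendreOp_apply_eq_legendre, smul_eq_mul, mul_assoc]

end FourierLegendre

open FourierLegendre CanonicalCommutation in
/-- L + aM commutes with the Fourier transform iff a = 1. -/
theorem fourier_commute_iff (d : ℕ) (hd : 1 ≤ d) (a : ℝ) :
    (∀ f : SchwartzMap (Ed d) ℂ, ∀ p : Ed d,
        FT (fun x => legendreOp (⇑f) x + (a : ℂ) * ((1 - ‖x‖ ^ 2 : ℝ) : ℂ) * f x) p =
          legendreOp (FT (⇑f)) p + (a : ℂ) * ((1 - ‖p‖ ^ 2 : ℝ) : ℂ) * FT (⇑f) p)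
      ↔ a = 1 := by
  have : Nonempty (Fin d) := ⟨⟨0, hd⟩⟩
  simp_rw [legendreOp_add_mul_weight_apply, FT_eq_fourierNormalized,
    legendreOp_add_mul_weight_apply]
  rw [← Complex.ofReal_eq_one, ← commute_legendre_add_smul_weight_iff
    (isUnit_fourierNormalized (d := d)) fourierNormalized_mul_partialCLM
    fourierNormalized_mul_coordMulCLM partialCLM_mul_coordMulCLM coordMulCLM_commute]
  simp only [Commute, SemiconjBy, ContinuousLinearMap.ext_iff, SchwartzMap.ext_iff,
    mul_apply_eq_comp, ContinuousLinearEquiv.coe_coe]
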